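/- Let n ≥ 1 and let U and V be 2^n × 2^n unitary matrices. For every j ∈ {1,…,n}, there exists a 2 × 2 unitary V_j such that, replacing V by V' := (V_j acting on qubit j, tensored with the identity on the other qubits) · V, the entanglement fidelity satisfies F_e^{(j)}(U,V') ≥ 1/4; equivalently, C_LHST^{(j)}(U, V') ≤ 3/4. -/

import Mathlib

/-!
Split the register into qubit `j` and the remaining qubits, and cut `W = U V†` into the
`2 × 2` blocks `W_{fg}` indexed by states `f, g` of the remaining qubits. Then
`F_e^{(j)}(U, V) = 2^{-(n+1)} Σ_{f,g} |Tr W_{fg}|²`, and replacing `V` by `(P on qubit j) · V`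
replaces each block by `W_{fg} P†`. The Pauli matrices `I, X, Y, Z` are orthogonal for the
Hilbert–Schmidt inner product with squared norm `2`, so `Σ_P |Tr (B P†)|² = 2 ‖B‖²` for every
`2 × 2` matrix `B`. Summed over the blocks of the unitary `W` this gives `2 ‖W‖² = 2^{n+1}`, so the
four fidelities obtained from `P = I, X, Y, Z` add up to `1` and one of them is at least `1/4`.
-/

open Matrix Kronecker Complex

noncomputable section

/-- The Hilbert-Schmidt test cost `C_HST(U,V) = 1 - |Tr(V†U)|²/d²` for `d × d` matrices. -/
def CHSTd (d : ℕ) (U V : Matrix (Fin d) (Fin d) ℂ) : ℝ :=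
  1 - ‖(Vᴴ * U).trace‖ ^ 2 / (d : ℝ) ^ 2

/-- The Hilbert-Schmidt test cost for unitaries on `n` qubits (`d = 2^n`). -/
def CHST (n : ℕ) (U V : Matrix (Fin n → Fin 2) (Fin n → Fin 2) ℂ) : ℝ :=
  1 - ‖(Vᴴ * U).trace‖ ^ 2 / ((2 : ℝ) ^ n) ^ 2

/-- The local channel `E_j(ρ) = Tr_{j̄}[ W (ρ_(j) ⊗ I/2^(n-1)) W† ]`, where `ρ` is placed on
qubit `j`, the maximally mixed state on the other qubits, and the partial trace is over all
qubits except `j`.  (The sum over `r` double-counts the assignments of the qubits other than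
`j`, whence the extra factor `1/2`.) -/
def Ej (n : ℕ) (j : Fin n) (W : Matrix (Fin n → Fin 2) (Fin n → Fin 2) ℂ)
    (ρ : Matrix (Fin 2) (Fin 2) ℂ) : Matrix (Fin 2) (Fin 2) ℂ :=
  Matrix.of fun a b =>
    (1 / 2 ^ (n - 1) : ℂ) * (1 / 2) *
      ∑ r : Fin n → Fin 2, ∑ s : Fin n → Fin 2, ∑ t : Fin n → Fin 2,
        (if Function.update s j 0 = Function.update t j 0 then
          W (Function.update r j a) s * ρ (s j) (t j) * star (W (Function.update r j b) t)
        else 0)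

/-- The two-qubit maximally entangled state `|Φ₂⁺⟩ = (|00⟩+|11⟩)/√2`. -/
def phi2 : (Fin 2 × Fin 2) → ℂ := fun p => if p.1 = p.2 then ((1 / Real.sqrt 2 : ℝ) : ℂ) else 0

/-- The projector `|Φ₂⁺⟩⟨Φ₂⁺|`. -/
def phi2Proj : Matrix (Fin 2 × Fin 2) (Fin 2 × Fin 2) ℂ :=
  Matrix.of fun p q => if p.1 = p.2 ∧ q.1 = q.2 then (1 / 2 : ℂ) else 0

/-- `(E ⊗ id)(ρ)` for a map `E` on one-qubit matrices and a two-qubit matrix `ρ`. -/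
def tensorId (E : Matrix (Fin 2) (Fin 2) ℂ → Matrix (Fin 2) (Fin 2) ℂ)
    (ρ : Matrix (Fin 2 × Fin 2) (Fin 2 × Fin 2) ℂ) :
    Matrix (Fin 2 × Fin 2) (Fin 2 × Fin 2) ℂ :=
  Matrix.of fun p q => ∑ a : Fin 2, ∑ b : Fin 2,
    ρ (a, p.2) (b, q.2) * E (Matrix.single a b 1) p.1 q.1

/-- The entanglement fidelity `F_e^(j) = ⟨Φ₂⁺|(E_j ⊗ id)(|Φ₂⁺⟩⟨Φ₂⁺|)|Φ₂⁺⟩`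
(as a complex number), with `W = U V†`. -/
def FeC (n : ℕ) (j : Fin n) (U V : Matrix (Fin n → Fin 2) (Fin n → Fin 2) ℂ) : ℂ :=
  star phi2 ⬝ᵥ (tensorId (Ej n j (U * Vᴴ)) phi2Proj).mulVec phi2

/-- The entanglement fidelity `F_e^(j)` (a real number). -/
def Fe (n : ℕ) (j : Fin n) (U V : Matrix (Fin n → Fin 2) (Fin n → Fin 2) ℂ) : ℝ :=
  (FeC n j U V).re

/-- The local Hilbert-Schmidt cost for qubit `j`: `C_LHST^(j)(U,V) = 1 - F_e^(j)`. -/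
def CLHSTj (n : ℕ) (j : Fin n) (U V : Matrix (Fin n → Fin 2) (Fin n → Fin 2) ℂ) : ℝ :=
  1 - Fe n j U V

/-- The local Hilbert-Schmidt cost `C_LHST(U,V) = (1/n) Σ_j C_LHST^(j)(U,V)`. -/
def CLHST (n : ℕ) (U V : Matrix (Fin n → Fin 2) (Fin n → Fin 2) ℂ) : ℝ :=
  (1 / n : ℝ) * ∑ j : Fin n, CLHSTj n j U V

end

noncomputable section

/-- The one-qubit gate `A` acting on qubit `j`, tensored with the identity on the
remaining qubits of an `n`-qubit register. -/
def oneQubitOn (n : ℕ) (j : Fin n) (A : Matrix (Fin 2) (Fin 2) ℂ) :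
    Matrix (Fin n → Fin 2) (Fin n → Fin 2) ℂ :=
  Matrix.of fun s t =>
    if Function.update s j 0 = Function.update t j 0 then A (s j) (t j) else 0

section

variable {n : ℕ}

abbrev OtherQubits (n : ℕ) (j : Fin n) : Type := {i : Fin n // i ≠ j} → Fin 2

def qubitSplit (j : Fin n) : (Fin n → Fin 2) ≃ Fin 2 × OtherQubits n j :=
  Equiv.funSplitAt j (Fin 2)

@[simp]
lemma qubitSplit_symm_apply_self (j : Fin n) (a : Fin 2) (f : OtherQubits n j) :
    (qubitSplit j).symm (a, f) j = a := by
  simp [qubitSplit]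

@[simp]
lemma update_qubitSplit_symm (j : Fin n) (a b : Fin 2) (f : OtherQubits n j) :
    Function.update ((qubitSplit j).symm (a, f)) j b = (qubitSplit j).symm (b, f) := by
  funext i
  rcases eq_or_ne i j with rfl | h
  · simp
  · simp [qubitSplit, h]

lemma sum_qubitSplit {M : Type*} [AddCommMonoid M] (j : Fin n) (F : (Fin n → Fin 2) → M) :
    ∑ r, F r = ∑ a : Fin 2, ∑ f : OtherQubits n j, F ((qubitSplit j).symm (a, f)) := by
  rw [← Equiv.sum_comp (qubitSplit j).symm, Fintype.sum_prod_type]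

lemma oneQubitOn_qubitSplit_symm (j : Fin n) (A : Matrix (Fin 2) (Fin 2) ℂ) (a b : Fin 2)
    (f g : OtherQubits n j) :
    oneQubitOn n j A ((qubitSplit j).symm (a, f)) ((qubitSplit j).symm (b, g)) =
      if f = g then A a b else 0 := by
  simp [oneQubitOn]

def envBlock {α : Type*} (j : Fin n) (W : Matrix (Fin n → Fin 2) (Fin n → Fin 2) α)
    (f g : OtherQubits n j) : Matrix (Fin 2) (Fin 2) α :=
  of fun a b => W ((qubitSplit j).symm (a, f)) ((qubitSplit j).symm (b, g))

lemma envBlock_mul_oneQubitOn_conjTranspose (j : Fin n)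
    (W : Matrix (Fin n → Fin 2) (Fin n → Fin 2) ℂ) (A : Matrix (Fin 2) (Fin 2) ℂ)
    (f g : OtherQubits n j) :
    envBlock j (W * (oneQubitOn n j A)ᴴ) f g = envBlock j W f g * Aᴴ := by
  ext a b
  simp only [envBlock, of_apply, mul_apply, sum_qubitSplit j, conjTranspose_apply,
    oneQubitOn_qubitSplit_symm, apply_ite star, star_zero, mul_ite, mul_zero]
  rw [Finset.sum_comm]
  simp

lemma sum_normSq_envBlock (j : Fin n) (W : Matrix (Fin n → Fin 2) (Fin n → Fin 2) ℂ) :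
    ∑ f, ∑ g, ∑ a, ∑ b, normSq (envBlock j W f g a b) = ∑ r, ∑ s, normSq (W r s) := by
  simp only [sum_qubitSplit j, envBlock, of_apply]
  rw [Finset.sum_congr rfl fun f _ => Finset.sum_comm, Finset.sum_comm]
  exact Finset.sum_congr rfl fun a _ => Finset.sum_congr rfl fun f _ => Finset.sum_comm

lemma sum_normSq_apply_of_mem_unitaryGroup {ι : Type*} [Fintype ι] [DecidableEq ι]
    {W : Matrix ι ι ℂ} (hW : W ∈ unitaryGroup ι ℂ) :
    ∑ r, ∑ s, normSq (W r s) = Fintype.card ι := by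
  have hrow (r : ι) : ∑ s, normSq (W r s) = 1 := by
    have := congrFun (congrFun (mem_unitaryGroup_iff.mp hW) r) r
    simp only [mul_apply, star_apply, RCLike.star_def, mul_conj, one_apply_eq] at this
    exact_mod_cast this
  simp [hrow]

lemma star_phi2_dotProduct_tensorId_phi2Proj_mulVec
    (E : Matrix (Fin 2) (Fin 2) ℂ → Matrix (Fin 2) (Fin 2) ℂ) :
    star phi2 ⬝ᵥ tensorId E phi2Proj *ᵥ phi2 = (1 / 4) * ∑ x, ∑ y, E (single x y 1) x y := by
  have hsq : ((Real.sqrt 2 : ℂ))⁻¹ ^ 2 = 1 / 2 := by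
    rw [inv_pow, ← ofReal_pow, Real.sq_sqrt zero_le_two]
    norm_num
  simp only [dotProduct, Pi.star_apply, phi2, one_div, ofReal_inv, RCLike.star_def, mulVec,
    tensorId, phi2Proj, of_apply, ite_mul, zero_mul, Fin.sum_univ_two, Fin.isValue, mul_ite,
    mul_zero, Fintype.sum_prod_type, Finset.sum_ite_eq, Finset.mem_univ, ↓reduceIte, and_true,
    one_ne_zero, and_false, add_zero, zero_ne_one, zero_add, map_inv₀, conj_ofReal, map_zero]
  ring_nf
  rw [hsq]
  ring

lemma Ej_single_apply (j : Fin n) (W : Matrix (Fin n → Fin 2) (Fin n → Fin 2) ℂ) (x y : Fin 2) :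
    Ej n j W (single x y 1) x y =
      (1 / 2 ^ (n - 1)) * ∑ f, ∑ g, envBlock j W f g x x * star (envBlock j W f g y y) := by
  simp only [Ej, of_apply, sum_qubitSplit j, update_qubitSplit_symm, qubitSplit_symm_apply_self,
    (qubitSplit j).symm.injective.eq_iff, Prod.mk.injEq, true_and, single_apply, ite_and,
    mul_ite, ite_mul, mul_one, mul_zero, zero_mul, Finset.sum_ite_eq,
    Finset.mem_univ, if_true, Finset.sum_ite_irrel, Finset.sum_const_zero]
  simp only [Finset.sum_const, Finset.card_univ, Fintype.card_fin, nsmul_eq_mul, envBlock, of_apply]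
  ring

lemma Fe_eq_sum_normSq_trace_envBlock (j : Fin n) (U V : Matrix (Fin n → Fin 2) (Fin n → Fin 2) ℂ) :
    Fe n j U V = (∑ f, ∑ g, normSq (envBlock j (U * Vᴴ) f g).trace) / 2 ^ (n + 1) := by
  have hpow : (2 : ℂ) ^ (n + 1) = 4 * 2 ^ (n - 1) := by
    conv_lhs => rw [← Nat.sub_add_cancel j.pos]
    ring
  have hsum : ∑ x : Fin 2, ∑ y : Fin 2, ∑ f, ∑ g,
      envBlock j (U * Vᴴ) f g x x * star (envBlock j (U * Vᴴ) f g y y) =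
        ∑ f, ∑ g, (normSq (envBlock j (U * Vᴴ) f g).trace : ℂ) := by
    simp only [← mul_conj, trace, diag, Fin.sum_univ_two, ← Finset.sum_add_distrib,
      RCLike.star_def, map_add]
    refine Finset.sum_congr rfl fun f _ => Finset.sum_congr rfl fun g _ => ?_
    ring
  rw [Fe, FeC, star_phi2_dotProduct_tensorId_phi2Proj_mulVec]
  simp only [Ej_single_apply, ← Finset.mul_sum, hsum]
  rw [← ofReal_re ((∑ f, ∑ g, normSq (envBlock j (U * Vᴴ) f g).trace) / 2 ^ (n + 1))]
  congr 1
  push_cast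
  rw [hpow]
  ring

def pauli : Fin 4 → Matrix (Fin 2) (Fin 2) ℂ :=
  ![1, !![0, 1; 1, 0], !![0, -I; I, 0], !![1, 0; 0, -1]]

lemma pauli_mem_unitaryGroup (k : Fin 4) : pauli k ∈ unitaryGroup (Fin 2) ℂ := by
  rw [mem_unitaryGroup_iff]
  fin_cases k <;> ext a b <;> fin_cases a <;> fin_cases b <;>
    simp [pauli, mul_apply, Fin.sum_univ_two, one_apply]

lemma sum_normSq_trace_mul_pauli_conjTranspose (B : Matrix (Fin 2) (Fin 2) ℂ) :
    ∑ k, normSq (B * (pauli k)ᴴ).trace = 2 * ∑ a, ∑ b, normSq (B a b) := by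
  simp only [trace, pauli, diag_apply, mul_apply, conjTranspose_apply, RCLike.star_def,
    Fin.sum_univ_two, Fin.isValue, Fin.sum_univ_four, cons_val_zero, one_apply, ↓reduceIte,
    map_one, mul_one, zero_ne_one, map_zero, mul_zero, add_zero, one_ne_zero, zero_add,
    cons_val_one, of_apply, cons_val', cons_val_fin_one, cons_val, map_neg, conj_I, neg_neg,
    mul_neg]
  simp only [normSq_apply, add_re, add_im, neg_re, neg_im, mul_re, mul_im, I_re, I_im]
  ring

lemma sum_Fe_oneQubitOn_pauli_mul (j : Fin n) {U V : Matrix (Fin n → Fin 2) (Fin n → Fin 2) ℂ}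
    (hU : U ∈ unitaryGroup (Fin n → Fin 2) ℂ) (hV : V ∈ unitaryGroup (Fin n → Fin 2) ℂ) :
    ∑ k, Fe n j U (oneQubitOn n j (pauli k) * V) = 1 := by
  have hW : U * Vᴴ ∈ unitaryGroup (Fin n → Fin 2) ℂ := mul_mem hU (Unitary.star_mem hV)
  have hblocks : ∑ k, ∑ f, ∑ g, normSq (envBlock j (U * Vᴴ) f g * (pauli k)ᴴ).trace =
      2 ^ (n + 1) := by
    rw [Finset.sum_comm, Finset.sum_congr rfl fun f _ => Finset.sum_comm]
    simp only [sum_normSq_trace_mul_pauli_conjTranspose, ← Finset.mul_sum, sum_normSq_envBlock,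
      sum_normSq_apply_of_mem_unitaryGroup hW, Fintype.card_fun, Fintype.card_fin]
    push_cast
    ring
  simp only [Fe_eq_sum_normSq_trace_envBlock, conjTranspose_mul, ← Matrix.mul_assoc, envBlock_mul_oneQubitOn_conjTranspose,
    ← Finset.sum_div, hblocks]
  exact div_self (by positivity)

end

theorem stmt11_general (n : ℕ)
    (U V : Matrix (Fin n → Fin 2) (Fin n → Fin 2) ℂ)
    (hU : U ∈ Matrix.unitaryGroup (Fin n → Fin 2) ℂ)
    (hV : V ∈ Matrix.unitaryGroup (Fin n → Fin 2) ℂ)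
    (j : Fin n) :
    ∃ Vj : Matrix (Fin 2) (Fin 2) ℂ, Vj ∈ Matrix.unitaryGroup (Fin 2) ℂ ∧
      Fe n j U (oneQubitOn n j Vj * V) ≥ 1 / 4 ∧
      CLHSTj n j U (oneQubitOn n j Vj * V) ≤ 3 / 4 := by
  obtain ⟨k, -, hk⟩ := Finset.exists_le_of_sum_le (f := fun _ => (1 / 4 : ℝ))
    (g := fun k => Fe n j U (oneQubitOn n j (pauli k) * V)) Finset.univ_nonempty
    (by simp [sum_Fe_oneQubitOn_pauli_mul j hU hV])
  exact ⟨pauli k, pauli_mem_unitaryGroup k, hk, by rw [CLHSTj]; linarith⟩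

/-- For unitaries `U`, `V` on `n ≥ 1` qubits and any `j`, there is a
one-qubit unitary `V_j` such that, with `V' = (V_j on qubit j) · V`, the entanglement
fidelity satisfies `F_e^(j)(U,V') ≥ 1/4`; equivalently `C_LHST^(j)(U,V') ≤ 3/4`. -/
theorem stmt11 (n : ℕ) (hn : 1 ≤ n)
    (U V : Matrix (Fin n → Fin 2) (Fin n → Fin 2) ℂ)
    (hU : U ∈ Matrix.unitaryGroup (Fin n → Fin 2) ℂ)
    (hV : V ∈ Matrix.unitaryGroup (Fin n → Fin 2) ℂ)
    (j : Fin n) :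
    ∃ Vj : Matrix (Fin 2) (Fin 2) ℂ, Vj ∈ Matrix.unitaryGroup (Fin 2) ℂ ∧
      Fe n j U (oneQubitOn n j Vj * V) ≥ 1 / 4 ∧
      CLHSTj n j U (oneQubitOn n j Vj * V) ≤ 3 / 4 :=
  stmt11_general n U V hU hV j
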